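/- No linearizations in 𝔻𝕄(P) for singular polynomials: let P(λ) be a singular n×n matrix polynomial of degree k ≥ 2. Then no matrix pencil in 𝔻𝕄(P) = 𝕄₁(P) ∩ 𝕄₂(P) is a linearization of P(λ). -/

import Mathlib

open Polynomial Matrix

noncomputable section

/-- `Φ_k(λ) ⊗ I_n` as a `kn × n` polynomial matrix: its `i`-th block row (0-based)
is `φ_{k-1-i}(λ) I_n`. -/
def PhiMat (n k : ℕ) (φ : ℕ → Polynomial ℝ) :
    Matrix (Fin k × Fin n) (Fin n) (Polynomial ℝ) :=
  Matrix.of fun p s => if p.2 = s then φ (k - 1 - p.1.val) else 0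

/-- The matrix polynomial `P(λ) = Σ_{i=0}^k P_i φ_i(λ)`. -/
def matP (n k : ℕ) (φ : ℕ → Polynomial ℝ) (Pm : ℕ → Matrix (Fin n) (Fin n) ℝ) :
    Matrix (Fin n) (Fin n) (Polynomial ℝ) :=
  Matrix.of fun r s => ∑ i ∈ Finset.range (k + 1), C (Pm i r s) * φ i

/-- `v ⊗ Q` as a `kn × n` polynomial matrix. -/
def vKron (n k : ℕ) (v : Fin k → ℝ) (Q : Matrix (Fin n) (Fin n) (Polynomial ℝ)) :
    Matrix (Fin k × Fin n) (Fin n) (Polynomial ℝ) :=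
  Matrix.of fun p s => C (v p.1) * Q p.2 s

/-- `v^T ⊗ Q` as an `n × kn` polynomial matrix. -/
def vKronRow (n k : ℕ) (v : Fin k → ℝ) (Q : Matrix (Fin n) (Fin n) (Polynomial ℝ)) :
    Matrix (Fin n) (Fin k × Fin n) (Polynomial ℝ) :=
  Matrix.of fun s q => C (v q.1) * Q s q.2

/-- A matrix pencil: a matrix polynomial each of whose entries has degree at most `1`. -/
def IsPencil {m m' : Type*} (L : Matrix m m' (Polynomial ℝ)) : Prop :=
  ∀ p q, (L p q).degree ≤ 1

/-- `ℒ(λ) ∈ 𝕄₁(P)` with ansatz vector `v`, i.e. `ℒ(λ)(Φ_k(λ) ⊗ I_n) = v ⊗ P(λ)`. -/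
def Ansatz1 (n k : ℕ) (φ : ℕ → Polynomial ℝ) (Pm : ℕ → Matrix (Fin n) (Fin n) ℝ)
    (L : Matrix (Fin k × Fin n) (Fin k × Fin n) (Polynomial ℝ)) (v : Fin k → ℝ) : Prop :=
  L * PhiMat n k φ = vKron n k v (matP n k φ Pm)

/-- `ℒ(λ) ∈ 𝕄₂(P)` with ansatz vector `w`, i.e. `(Φ_k(λ)^T ⊗ I_n) ℒ(λ) = w^T ⊗ P(λ)`. -/
def Ansatz2 (n k : ℕ) (φ : ℕ → Polynomial ℝ) (Pm : ℕ → Matrix (Fin n) (Fin n) ℝ)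
    (L : Matrix (Fin k × Fin n) (Fin k × Fin n) (Polynomial ℝ)) (w : Fin k → ℝ) : Prop :=
  (PhiMat n k φ)ᵀ * L = vKronRow n k w (matP n k φ Pm)

/-- The anchor pencil `F_Φ^P(λ) = [m_Φ^P(λ); M_Φ(λ)]`. -/
def FPhi (n k : ℕ) (a b c : ℕ → ℝ) (Pm : ℕ → Matrix (Fin n) (Fin n) ℝ) :
    Matrix (Fin k × Fin n) (Fin k × Fin n) (Polynomial ℝ) :=
  Matrix.of fun p q =>
    if p.1.val = 0 then
      -- the block row m_Φ^P(λ)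
      if q.1.val = 0 then
        C ((a (k - 1))⁻¹) * (X - C (b (k - 1))) * C (Pm k p.2 q.2) + C (Pm (k - 1) p.2 q.2)
      else if q.1.val = 1 then
        C (Pm (k - 2) p.2 q.2) - C (c (k - 1) / a (k - 1)) * C (Pm k p.2 q.2)
      else
        C (Pm (k - 1 - q.1.val) p.2 q.2)
    else
      -- the block rows M_Φ(λ) = M_Φ^⋆(λ) ⊗ I_n
      (if q.1.val + 1 = p.1.val then -C (a (k - 1 - p.1.val))
       else if q.1.val = p.1.val then X - C (b (k - 1 - p.1.val))
       else if q.1.val = p.1.val + 1 then -C (c (k - 1 - p.1.val))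
       else 0) * (if p.2 = q.2 then 1 else 0)

/-- The `kn × kn` real matrix `[v ⊗ I_n, B]`: first `n` columns form `v ⊗ I_n`,
the remaining `(k-1)n` columns form `B`. -/
def extCols (n k : ℕ) (v : Fin k → ℝ)
    (B : Matrix (Fin k × Fin n) (Fin (k - 1) × Fin n) ℝ) :
    Matrix (Fin k × Fin n) (Fin k × Fin n) ℝ :=
  Matrix.of fun p q =>
    if h : q.1.val = 0 then (if p.2 = q.2 then v p.1 else 0)
    else B p (⟨q.1.val - 1, by have := q.1.isLt; omega⟩, q.2)

/-- The `kn × kn` real matrix `[w^T ⊗ I_n; B]`: first `n` rows form `w^T ⊗ I_n`,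
the remaining `(k-1)n` rows form `B`. -/
def extRows (n k : ℕ) (w : Fin k → ℝ)
    (B : Matrix (Fin (k - 1) × Fin n) (Fin k × Fin n) ℝ) :
    Matrix (Fin k × Fin n) (Fin k × Fin n) ℝ :=
  Matrix.of fun p q =>
    if h : p.1.val = 0 then (if p.2 = q.2 then w q.1 else 0)
    else B (⟨p.1.val - 1, by have := p.1.isLt; omega⟩, p.2) q

/-- A real matrix viewed as a constant matrix polynomial. -/
def liftC {m m' : Type*} (A : Matrix m m' ℝ) : Matrix m m' (Polynomial ℝ) :=
  A.map C

/-- Block transpose of a matrix consisting of `n × n` blocks: block `(i,j)` of `A^𝓑`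
is block `(j,i)` of `A`. -/
def blockTr {n k1 k2 : ℕ} {R : Type*} (A : Matrix (Fin k1 × Fin n) (Fin k2 × Fin n) R) :
    Matrix (Fin k2 × Fin n) (Fin k1 × Fin n) R :=
  Matrix.of fun p q => A (q.1, p.2) (p.1, q.2)

/-- `rev_d Q(λ) = λ^d Q(1/λ)`, entrywise reversal of a matrix polynomial of degree at most `d`. -/
def revMat {m m' : Type*} (d : ℕ) (L : Matrix m m' (Polynomial ℝ)) :
    Matrix m m' (Polynomial ℝ) :=
  Matrix.of fun p q => (L p q).reflect d

/-- Evaluation of a real matrix polynomial at a complex number. -/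
def evalC {m m' : Type*} (α : ℂ) (L : Matrix m m' (Polynomial ℝ)) : Matrix m m' ℂ :=
  Matrix.of fun p q => aeval α (L p q)

/-- A matrix polynomial viewed as a matrix over the field `ℝ(λ)` of rational functions. -/
def liftRat {m m' : Type*} (L : Matrix m m' (Polynomial ℝ)) : Matrix m m' (RatFunc ℝ) :=
  L.map (algebraMap (Polynomial ℝ) (RatFunc ℝ))

/-- `v ⊗ I_n` as a `kn × n` complex matrix. -/
def vKronC (n k : ℕ) (v : Fin k → ℝ) : Matrix (Fin k × Fin n) (Fin n) ℂ :=
  Matrix.of fun p s => if p.2 = s then (v p.1 : ℂ) else 0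

/-- `v ⊗ I_n` as a `kn × n` matrix over `ℝ(λ)`. -/
def vKronRat (n k : ℕ) (v : Fin k → ℝ) : Matrix (Fin k × Fin n) (Fin n) (RatFunc ℝ) :=
  Matrix.of fun p s => if p.2 = s then RatFunc.C (v p.1) else 0

/-- The pencil `Xm λ + Ym` as a matrix polynomial. -/
def pencilPoly {m : Type*} (Xm Ym : Matrix m m ℝ) : Matrix m m (Polynomial ℝ) :=
  Matrix.of fun p q => C (Xm p q) * X + C (Ym p q)

/-- `diag(P(λ), I_{(k-1)n})` as a `kn × kn` matrix polynomial. -/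
def diagPI (n k : ℕ) (Pp : Matrix (Fin n) (Fin n) (Polynomial ℝ)) :
    Matrix (Fin k × Fin n) (Fin k × Fin n) (Polynomial ℝ) :=
  Matrix.of fun p q =>
    if p.1.val = 0 ∧ q.1.val = 0 then Pp p.2 q.2 else if p = q then 1 else 0

/-- `ℒ(λ)` is a linearization of `P(λ)`: there are `U(λ), V(λ)` with nonzero real constant
determinants such that `U(λ)ℒ(λ)V(λ) = diag(P(λ), I_{(k-1)n})`. -/
def IsLinearization (n k : ℕ)
    (L : Matrix (Fin k × Fin n) (Fin k × Fin n) (Polynomial ℝ))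
    (Pp : Matrix (Fin n) (Fin n) (Polynomial ℝ)) : Prop :=
  ∃ U V : Matrix (Fin k × Fin n) (Fin k × Fin n) (Polynomial ℝ),
    (∃ cu : ℝ, cu ≠ 0 ∧ U.det = C cu) ∧ (∃ cv : ℝ, cv ≠ 0 ∧ V.det = C cv) ∧
    U * L * V = diagPI n k Pp

/-- `ℒ(λ)` is a strong linearization of `P(λ)` (of degree `k`): it is a linearization and
`rev₁ ℒ(λ)` is a linearization of `rev_k P(λ)`. -/
def IsStrongLin (n k : ℕ)
    (L : Matrix (Fin k × Fin n) (Fin k × Fin n) (Polynomial ℝ))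
    (Pp : Matrix (Fin n) (Fin n) (Polynomial ℝ)) : Prop :=
  IsLinearization n k L Pp ∧ IsLinearization n k (revMat 1 L) (revMat k Pp)


/-!
Suppose `U L V = diag(P, I)` with `U, V` unimodular. Evaluating at a point `μ` gives
`dim ker L(μ) ≤ dim ker P(μ)`, while `L ∈ 𝕄₁(P)` gives `Φ_k(μ) ⊗ u ∈ ker L(μ)` for every
`u ∈ ker P(μ)`. Since `P` is singular, `L ∈ 𝕄₂(P)` produces a nonzero constant vector `ξ` with
`L(λ) ξ ≡ 0`: if `w₁ ≠ 0` take `ξ = Φ_k(λ₀) ⊗ x` with `λ₀` a root of `Σ wᵢ φ_{k-i}` and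
`x ∈ ker P(λ₀)`; if `w₁ = 0` take `ξ = e₁ ⊗ x` with `x` in the kernel of the leading coefficient
of `P`. In both cases `L ξ` is a fixed scalar polynomial times a constant vector, and
`(Φ_k^T ⊗ I) L ξ = (w^T ⊗ P) ξ = 0` together with the linear independence of the `φ_j` forces
`L ξ = 0`. For all but one `μ` the vector `ξ` is not of the form `Φ_k(μ) ⊗ u`, so
`dim ker L(μ) > dim ker P(μ)`, a contradiction. The root `λ₀` is why we work over `ℂ`.
-/

namespace Polynomial

theorem exists_eq_X_sub_C_mul_C_of_degree_le_one {R : Type*} [CommRing R] [Nontrivial R]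
    {p : R[X]} {a : R} (hp : p.degree ≤ 1) (ha : p.IsRoot a) : ∃ c, p = (X - C a) * C c := by
  refine ⟨(p /ₘ (X - C a)).coeff 0, ?_⟩
  have hq : (p /ₘ (X - C a)).natDegree = 0 := by
    rw [natDegree_divByMonic _ (monic_X_sub_C a), natDegree_X_sub_C]
    have : p.natDegree ≤ 1 := natDegree_le_of_degree_le hp
    omega
  rw [← eq_C_of_natDegree_eq_zero hq, mul_divByMonic_eq_iff_isRoot.mpr ha]

theorem degree_eq_of_threeTermRecurrence {F : Type*} [Field F] {a b c : ℕ → F}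
    {φ : ℕ → F[X]} (ha : ∀ j, a j ≠ 0) (hφ0 : φ 0 = 1)
    (hφ1 : C (a 0) * φ 1 = (X - C (b 0)) * φ 0)
    (hφrec : ∀ j, C (a (j + 1)) * φ (j + 2) =
      (X - C (b (j + 1))) * φ (j + 1) - C (c (j + 1)) * φ j) :
    ∀ j, (φ j).degree = j := by
  intro j
  induction j using Nat.twoStepInduction with
  | zero => simp [hφ0]
  | one => rw [← degree_C_mul (ha 0), hφ1, hφ0, mul_one, degree_X_sub_C, Nat.cast_one]
  | more j ih₀ ih₁ =>
    have hlow : (C (c (j + 1)) * φ j).degree < ((X - C (b (j + 1))) * φ (j + 1)).degree := by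
      rw [degree_mul (p := X - _), degree_X_sub_C, ih₁, ← smul_eq_C_mul]
      exact (degree_smul_le _ _).trans_lt (by rw [ih₀]; norm_cast; omega)
    rw [← degree_C_mul (ha (j + 1)), hφrec, degree_sub_eq_left_of_degree_lt hlow, degree_mul,
      degree_X_sub_C, ih₁]
    norm_cast
    omega

end Polynomial

namespace Matrix

variable {m ι : Type*} [Fintype ι]

theorem det_map_coeff {R : Type*} [CommRing R] [DecidableEq ι] {M : Matrix ι ι R[X]} {d : ℕ}
    (hM : ∀ i j, (M i j).natDegree ≤ d) :
    (M.map fun p => p.coeff d).det = M.det.coeff (Fintype.card ι * d) := by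
  simp only [det_apply, finsetSum_coeff, coeff_smul, ← Finset.card_univ,
    coeff_prod_of_natDegree_le _ _ _ fun i _ => hM _ _, map_apply]

theorem degree_mulVec_C_le {R : Type*} [CommSemiring R] {M : Matrix m ι R[X]} {d : ℕ}
    (hM : ∀ i j, (M i j).degree ≤ d) (ξ : ι → R) (i : m) :
    ((M *ᵥ fun j => C (ξ j)) i).degree ≤ d := by
  simp only [mulVec, dotProduct, mul_comm (M i _), ← smul_eq_C_mul, ← mem_degreeLE]
  exact Submodule.sum_mem _ fun j _ => Submodule.smul_mem _ _ (mem_degreeLE.2 (hM i j))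

end Matrix

section BlockDiagonal

variable {R : Type*} {n k : ℕ}

/-- `diag(A, I_{(k-1)n})`, the shape of `diagPI` over an arbitrary ring. -/
def diagWithId [Zero R] [One R] (k : ℕ) (A : Matrix (Fin n) (Fin n) R) :
    Matrix (Fin k × Fin n) (Fin k × Fin n) R :=
  Matrix.of fun p q => if p.1.val = 0 ∧ q.1.val = 0 then A p.2 q.2 else if p = q then 1 else 0

theorem diagWithId_map [Semiring R] {S : Type*} [Semiring S] (f : R →+* S)
    (A : Matrix (Fin n) (Fin n) R) : (diagWithId k A).map f = diagWithId k (A.map f) := by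
  ext p q
  simp only [diagWithId, map_apply, of_apply]
  split_ifs <;> simp

theorem diagWithId_mulVec_apply [Semiring R] (A : Matrix (Fin n) (Fin n) R)
    (z : Fin k × Fin n → R) (p : Fin k × Fin n) :
    (diagWithId k A *ᵥ z) p = if p.1.val = 0 then (A *ᵥ fun t => z (p.1, t)) p.2 else z p := by
  obtain ⟨i, s⟩ := p
  simp only [mulVec, dotProduct, diagWithId, of_apply, Fintype.sum_prod_type]
  rw [Finset.sum_eq_single i]
  · by_cases hi : i.val = 0 <;> simp [hi]
  · intro j _ hji
    have : ¬ (i.val = 0 ∧ j.val = 0) := fun h => hji (Fin.ext (h.2.trans h.1.symm))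
    simp [this, Ne.symm hji]
  · simp

end BlockDiagonal

section KernelDimension

open Module LinearMap

variable {K : Type*} [Field K]

theorem finrank_ker_lt_of_forall_ne {ι κ : Type*} [Fintype ι] [Fintype κ] {A : Matrix ι ι K}
    {B : Matrix κ κ K} (g : (κ → K) →ₗ[K] (ι → K)) (hg : Function.Injective g)
    (hmaps : ∀ u, B *ᵥ u = 0 → A *ᵥ g u = 0) {ξ : ι → K} (hξ : A *ᵥ ξ = 0) (hξg : ∀ u, g u ≠ ξ) :
    finrank K (ker B.mulVecLin) < finrank K (ker A.mulVecLin) := by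
  have hlt : (ker B.mulVecLin).map g < ker A.mulVecLin := by
    refine SetLike.lt_iff_le_and_exists.2 ⟨?_, ξ, hξ, ?_⟩
    · rintro _ ⟨u, hu, rfl⟩
      exact hmaps u hu
    · rintro ⟨u, -, hu⟩
      exact hξg u hu
  rw [(Submodule.equivMapOfInjective g hg _).finrank_eq]
  exact Submodule.finrank_lt_finrank_of_lt hlt

theorem finrank_ker_le_of_mul_mul_eq_diagWithId {n k : ℕ}
    {A U V : Matrix (Fin k × Fin n) (Fin k × Fin n) K} {B : Matrix (Fin n) (Fin n) K}
    (hk : 0 < k) (hV : IsUnit V.det) (h : U * A * V = diagWithId k B) :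
    finrank K (ker A.mulVecLin) ≤ finrank K (ker B.mulVecLin) := by
  let i₀ : Fin k := ⟨0, hk⟩
  have hD : ∀ x, A *ᵥ x = 0 → diagWithId k B *ᵥ (V⁻¹ *ᵥ x) = 0 := fun x hx => by
    rw [← h, mulVec_mulVec, mul_assoc (U * A), mul_nonsing_inv _ hV, mul_one, ← mulVec_mulVec,
      hx, mulVec_zero]
  -- `x ↦ (V⁻¹ x)₀`, the first block of `V⁻¹ x`, embeds `ker A` into `ker B`
  let T : (Fin k × Fin n → K) →ₗ[K] (Fin n → K) :=
    (funLeft K K fun t => (i₀, t)).comp V⁻¹.mulVecLin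
  have hT : ∀ x ∈ ker A.mulVecLin, T x ∈ ker B.mulVecLin := fun x hx => by
    funext s
    simpa [T, i₀, diagWithId_mulVec_apply, funLeft, Function.comp_def] using
      congrFun (hD x hx) (i₀, s)
  refine finrank_le_finrank_of_injective (f := T.restrict hT) ?_
  rw [← ker_eq_bot, ker_eq_bot']
  rintro ⟨x, hx⟩ hTx
  have hy : V⁻¹ *ᵥ x = 0 := by
    funext p
    by_cases hp : p.1.val = 0
    · rw [show p = (i₀, p.2) from Prod.ext (Fin.ext hp) rfl]
      exact congrFun (congrArg Subtype.val hTx) p.2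
    · simpa [diagWithId_mulVec_apply, hp] using congrFun (hD x hx) p
  ext1
  simpa [mulVec_mulVec, mul_nonsing_inv _ hV] using congrArg (V *ᵥ ·) hy

end KernelDimension

section Ansatz

variable {R : Type*} [CommSemiring R] {n k : ℕ}

/-- `Ansatz1` over an arbitrary ring, written entrywise. -/
def RightAnsatz (φ : ℕ → R[X]) (P : Matrix (Fin n) (Fin n) R[X])
    (L : Matrix (Fin k × Fin n) (Fin k × Fin n) R[X]) (v : Fin k → R) : Prop :=
  ∀ p s, ∑ j : Fin k, L p (j, s) * φ (k - 1 - j) = C (v p.1) * P p.2 s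

/-- `Ansatz2` over an arbitrary ring, written entrywise. -/
def LeftAnsatz (φ : ℕ → R[X]) (P : Matrix (Fin n) (Fin n) R[X])
    (L : Matrix (Fin k × Fin n) (Fin k × Fin n) R[X]) (w : Fin k → R) : Prop :=
  ∀ s q, ∑ i : Fin k, φ (k - 1 - i) * L (i, s) q = C (w q.1) * P s q.2

/-- `u ↦ Φ_k(μ) ⊗ u`. -/
def phiKron (φ : ℕ → R[X]) (k : ℕ) (μ : R) : (Fin n → R) →ₗ[R] (Fin k × Fin n → R) where
  toFun u p := (φ (k - 1 - p.1)).eval μ * u p.2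
  map_add' u u' := by ext; simp [mul_add]
  map_smul' c u := by ext; simp [mul_left_comm]

theorem phiKron_apply (φ : ℕ → R[X]) (μ : R) (u : Fin n → R) (p : Fin k × Fin n) :
    phiKron φ k μ u p = (φ (k - 1 - p.1)).eval μ * u p.2 := rfl

variable {φ : ℕ → R[X]} {P : Matrix (Fin n) (Fin n) R[X]}
  {L : Matrix (Fin k × Fin n) (Fin k × Fin n) R[X]} {v w : Fin k → R}

theorem RightAnsatz.mulVec_phiKron_eq_zero (h : RightAnsatz φ P L v) {μ : R}
    {u : Fin n → R} (hu : P.map (eval μ) *ᵥ u = 0) :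
    L.map (eval μ) *ᵥ phiKron φ k μ u = 0 := by
  funext p
  have hrow : ∀ t, ∑ j : Fin k, (L p (j, t)).eval μ * (φ (k - 1 - j)).eval μ =
      v p.1 * (P p.2 t).eval μ := fun t => by
    simpa [eval_finsetSum] using congrArg (eval μ) (h p t)
  calc (L.map (eval μ) *ᵥ phiKron φ k μ u) p
      = ∑ t, (∑ j : Fin k, (L p (j, t)).eval μ * (φ (k - 1 - j)).eval μ) * u t := by
        simp only [mulVec, dotProduct, Fintype.sum_prod_type, phiKron_apply, map_apply,
          Finset.sum_mul, mul_assoc]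
        exact Finset.sum_comm
    _ = v p.1 * (P.map (eval μ) *ᵥ u) p.2 := by
        simp [hrow, mulVec, dotProduct, Finset.mul_sum, mul_assoc]
    _ = 0 := by simp [hu]

theorem LeftAnsatz.sum_mul_mulVec_C (h : LeftAnsatz φ P L w) (ξ : Fin k × Fin n → R)
    (s : Fin n) :
    ∑ i : Fin k, φ (k - 1 - i) * (L *ᵥ fun q => C (ξ q)) (i, s) =
      ∑ t, P s t * C (∑ j, w j * ξ (j, t)) := by
  calc ∑ i : Fin k, φ (k - 1 - i) * (L *ᵥ fun q => C (ξ q)) (i, s)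
      = ∑ q, (∑ i : Fin k, φ (k - 1 - i) * L (i, s) q) * C (ξ q) := by
        simp only [mulVec, dotProduct, Finset.mul_sum, Finset.sum_mul, mul_assoc]
        exact Finset.sum_comm
    _ = ∑ t, P s t * C (∑ j, w j * ξ (j, t)) := by
        simp only [h s, Fintype.sum_prod_type, map_sum, map_mul, Finset.mul_sum]
        rw [Finset.sum_comm]
        exact Finset.sum_congr rfl fun _ _ => Finset.sum_congr rfl fun _ _ => by ring

end Ansatz

section PencilsOverField

variable {K : Type*} [Field K] {n k : ℕ} {φ : ℕ → K[X]} {P : Matrix (Fin n) (Fin n) K[X]}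
  {L : Matrix (Fin k × Fin n) (Fin k × Fin n) K[X]} {v w : Fin k → K}

theorem sum_C_mul_eq_zero_of_degree_eq (hφ : ∀ j, (φ j).degree = j) {d : Fin k → K}
    (h : ∑ i : Fin k, C (d i) * φ (k - 1 - i) = 0) : d = 0 := by
  have hli : LinearIndependent K fun i : Fin k => φ (k - 1 - i) :=
    (Polynomial.Sequence.linearIndependent ⟨φ, hφ⟩).comp _ fun i j hij => Fin.ext (by omega)
  funext i
  exact Fintype.linearIndependent_iff.mp hli d (by simpa only [smul_eq_C_mul] using h) i

theorem phiKron_apply_last (hφ : ∀ j, (φ j).degree = j) (hk : 0 < k) (μ : K)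
    (u : Fin n → K) (t : Fin n) :
    phiKron φ k μ u (⟨k - 1, by omega⟩, t) = (φ 0).coeff 0 * u t := by
  simp only [phiKron_apply, Nat.sub_self]
  conv_lhs => rw [eq_C_of_degree_eq_zero (hφ 0), eval_C]

theorem phiKron_injective (hφ : ∀ j, (φ j).degree = j) (hk : 0 < k) (μ : K) :
    Function.Injective (phiKron (n := n) φ k μ) := fun u u' h => by
  funext t
  have h0 : (φ 0).coeff 0 ≠ 0 := coeff_ne_zero_of_eq_degree (hφ 0)
  simpa [phiKron_apply_last hφ hk, h0] using congrFun h (⟨k - 1, by omega⟩, t)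

/- If `ξ = Φ_k(0) ⊗ u = Φ_k(1) ⊗ u'`, the last block gives `u = u'` and the block before it
`φ₁(0) u = φ₁(1) u`; as `φ₁` has degree one, `u = 0`. -/
theorem exists_forall_phiKron_ne (hφ : ∀ j, (φ j).degree = j) (hk : 2 ≤ k)
    {ξ : Fin k × Fin n → K} (hξ : ξ ≠ 0) : ∃ μ, ∀ u, phiKron φ k μ u ≠ ξ := by
  by_contra! h
  obtain ⟨u, hu⟩ := h 0
  obtain ⟨u', hu'⟩ := h 1
  have huu' : u = u' := by
    funext t
    have h0 : (φ 0).coeff 0 ≠ 0 := coeff_ne_zero_of_eq_degree (hφ 0)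
    simpa [phiKron_apply_last hφ (by omega : 0 < k), h0] using
      congrFun (hu.trans hu'.symm) (⟨k - 1, by omega⟩, t)
  obtain ⟨t, ht⟩ : ∃ t, u t ≠ 0 := by
    by_contra! h0
    exact hξ (by rw [← hu, show u = 0 from funext h0, map_zero])
  have h1 := congrFun (hu.trans hu'.symm) (⟨k - 2, by omega⟩, t)
  rw [phiKron_apply, phiKron_apply, ← huu', show k - 1 - (k - 2) = 1 by omega,
    eq_X_add_C_of_degree_le_one (hφ 1).le] at h1
  exact coeff_ne_zero_of_eq_degree (hφ 1) (by simpa [ht] using h1)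

theorem LeftAnsatz.mulVec_C_eq_zero (hφ : ∀ j, (φ j).degree = j) (h : LeftAnsatz φ P L w)
    {ξ : Fin k × Fin n → K} (hξ : ∀ t, ∑ j, w j * ξ (j, t) = 0) {r : K[X]} (hr : r ≠ 0)
    (hdiv : ∀ p, ∃ c, (L *ᵥ fun q => C (ξ q)) p = r * C c) :
    (L *ᵥ fun q => C (ξ q)) = 0 := by
  choose c hc using hdiv
  have hcs : ∀ s, (fun i => c (i, s)) = 0 := fun s => by
    apply sum_C_mul_eq_zero_of_degree_eq hφ
    have hsum := h.sum_mul_mulVec_C ξ s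
    simp only [hξ, hc, map_zero, mul_zero, Finset.sum_const_zero] at hsum
    refine (mul_eq_zero.1 ?_).resolve_left hr
    rw [Finset.mul_sum, ← hsum]
    exact Finset.sum_congr rfl fun _ _ => by ring
  funext p
  rw [hc p, show c p = 0 from congrFun (hcs p.2) p.1]
  simp

theorem RightAnsatz.coeff_one_mul_leadingCoeff (hφ : ∀ j, (φ j).degree = j)
    (hL : ∀ p q, (L p q).degree ≤ 1) (h : RightAnsatz φ P L v) (hk : 0 < k)
    (p : Fin k × Fin n) (s : Fin n) :
    (L p (⟨0, hk⟩, s)).coeff 1 * (φ (k - 1)).leadingCoeff = v p.1 * (P p.2 s).coeff k := by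
  have hrow := congrArg (coeff · k) (h p s)
  simp only [finsetSum_coeff, coeff_C_mul] at hrow
  rw [← hrow, Fintype.sum_eq_single ⟨0, hk⟩]
  · have htop := coeff_mul_add_eq_of_natDegree_le
      (natDegree_le_of_degree_le (n := 1) (hL p (⟨0, hk⟩, s)))
      (natDegree_eq_of_degree_eq_some (hφ (k - 1))).le
    rw [show 1 + (k - 1) = k by omega] at htop
    simp [htop, leadingCoeff, natDegree_eq_of_degree_eq_some (hφ (k - 1))]
  · intro j hj
    have hj : 0 < (j : ℕ) := Nat.pos_of_ne_zero fun h0 => hj (Fin.ext h0)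
    apply coeff_eq_zero_of_degree_lt
    calc (L p (j, s) * φ (k - 1 - j)).degree ≤ 1 + ↑(k - 1 - j) :=
          (degree_mul_le _ _).trans (add_le_add (hL _ _) (hφ _).le)
      _ < k := by norm_cast; omega

theorem exists_ne_zero_mulVec_C_eq_zero_of_w_zero (hφ : ∀ j, (φ j).degree = j)
    (hk : 0 < k) (hL : ∀ p q, (L p q).degree ≤ 1) (hP : ∀ r s, (P r s).natDegree ≤ k)
    (hsing : P.det = 0) (hright : RightAnsatz φ P L v) (hleft : LeftAnsatz φ P L w)
    (hw : w ⟨0, hk⟩ = 0) :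
    ∃ ξ : Fin k × Fin n → K, ξ ≠ 0 ∧ (L *ᵥ fun q => C (ξ q)) = 0 := by
  let i₀ : Fin k := ⟨0, hk⟩
  obtain ⟨x, hx0, hx⟩ : ∃ x ≠ 0, (P.map fun p => p.coeff k) *ᵥ x = 0 :=
    exists_mulVec_eq_zero_iff.2 (by rw [det_map_coeff hP, hsing, coeff_zero])
  let ξ : Fin k × Fin n → K := fun q => if q.1 = i₀ then x q.2 else 0
  have hcoeff : ∀ p, ((L *ᵥ fun q => C (ξ q)) p).coeff 1 = 0 := fun p => by
    have hlc : (φ (k - 1)).leadingCoeff ≠ 0 :=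
      leadingCoeff_ne_zero.2 (ne_zero_of_coe_le_degree (hφ _).ge)
    refine (mul_eq_zero.1 ?_).resolve_right hlc
    calc ((L *ᵥ fun q => C (ξ q)) p).coeff 1 * (φ (k - 1)).leadingCoeff
        = ∑ t, (L p (i₀, t)).coeff 1 * (φ (k - 1)).leadingCoeff * x t := by
          simp [mulVec, dotProduct, Fintype.sum_prod_type, ξ, Finset.sum_mul, mul_right_comm]
      _ = v p.1 * ((P.map fun p => p.coeff k) *ᵥ x) p.2 := by
          simp [hright.coeff_one_mul_leadingCoeff hφ hL, mulVec, dotProduct, Finset.mul_sum,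
            mul_assoc, i₀]
      _ = 0 := by simp [hx]
  refine ⟨ξ, fun h => hx0 (funext fun t => by simpa [ξ] using congrFun h (i₀, t)), ?_⟩
  refine hleft.mulVec_C_eq_zero hφ (fun t => by simp [ξ, hw, i₀]) one_ne_zero fun p => ?_
  refine ⟨((L *ᵥ fun q => C (ξ q)) p).coeff 0, ?_⟩
  rw [eq_X_add_C_of_degree_le_one (degree_mulVec_C_le hL ξ p), hcoeff]
  simp

theorem exists_eval_sum_eq_zero [IsAlgClosed K] (hφ : ∀ j, (φ j).degree = j) (hk : 2 ≤ k)
    (hw : w ⟨0, by omega⟩ ≠ 0) : ∃ μ, ∑ j, w j * (φ (k - 1 - j)).eval μ = 0 := by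
  obtain ⟨μ, hμ⟩ := IsAlgClosed.exists_root (∑ j, C (w j) * φ (k - 1 - j)) fun h0 => by
    have htop : (∑ j, C (w j) * φ (k - 1 - j)).coeff (k - 1) =
        w ⟨0, by omega⟩ * (φ (k - 1)).coeff (k - 1) := by
      simp only [finsetSum_coeff, coeff_C_mul]
      rw [Fintype.sum_eq_single ⟨0, by omega⟩]
      · rfl
      · intro j hj
        have hj : 0 < (j : ℕ) := Nat.pos_of_ne_zero fun h0 => hj (Fin.ext h0)
        rw [coeff_eq_zero_of_degree_lt (by rw [hφ]; norm_cast; omega), mul_zero]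
    have hzero := coeff_eq_zero_of_degree_lt (n := k - 1) (by rw [h0]; norm_cast; omega)
    exact mul_ne_zero hw (coeff_ne_zero_of_eq_degree (hφ _)) (htop ▸ hzero)
  exact ⟨μ, by simpa [IsRoot, eval_finsetSum] using hμ⟩

theorem exists_ne_zero_mulVec_C_eq_zero_of_w_ne_zero [IsAlgClosed K]
    (hφ : ∀ j, (φ j).degree = j) (hk : 2 ≤ k) (hL : ∀ p q, (L p q).degree ≤ 1)
    (hsing : P.det = 0) (hright : RightAnsatz φ P L v) (hleft : LeftAnsatz φ P L w)
    (hw : w ⟨0, by omega⟩ ≠ 0) :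
    ∃ ξ : Fin k × Fin n → K, ξ ≠ 0 ∧ (L *ᵥ fun q => C (ξ q)) = 0 := by
  obtain ⟨μ, hμ⟩ := exists_eval_sum_eq_zero hφ hk hw
  obtain ⟨x, hx0, hx⟩ : ∃ x ≠ 0, P.map (eval μ) *ᵥ x = 0 := exists_mulVec_eq_zero_iff.2 (by
    rw [← coe_evalRingHom, ← RingHom.mapMatrix_apply, ← RingHom.map_det, hsing, map_zero])
  refine ⟨phiKron φ k μ x,
    fun h => hx0 (phiKron_injective hφ (by omega : 0 < k) μ (by simpa using h)),
    hleft.mulVec_C_eq_zero hφ (fun t => ?_) (X_sub_C_ne_zero μ) fun p => ?_⟩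
  · simp only [phiKron_apply, ← mul_assoc, ← Finset.sum_mul, hμ, zero_mul]
  · refine exists_eq_X_sub_C_mul_C_of_degree_le_one (degree_mulVec_C_le hL _ p) ?_
    rw [IsRoot, ← coe_evalRingHom, RingHom.map_mulVec]
    simpa [Function.comp_def] using congrFun (hright.mulVec_phiKron_eq_zero hx) p

theorem mul_mul_ne_diagWithId [IsAlgClosed K] (hφ : ∀ j, (φ j).degree = j)
    (hk : 2 ≤ k) (hL : ∀ p q, (L p q).degree ≤ 1) (hP : ∀ r s, (P r s).natDegree ≤ k)
    (hsing : P.det = 0) (hright : RightAnsatz φ P L v) (hleft : LeftAnsatz φ P L w)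
    {U V : Matrix (Fin k × Fin n) (Fin k × Fin n) K[X]} (hV : IsUnit V.det) :
    U * L * V ≠ diagWithId k P := by
  intro hUV
  obtain ⟨ξ, hξ0, hLξ⟩ : ∃ ξ : Fin k × Fin n → K, ξ ≠ 0 ∧ (L *ᵥ fun q => C (ξ q)) = 0 := by
    by_cases hw : w ⟨0, by omega⟩ = 0
    · exact exists_ne_zero_mulVec_C_eq_zero_of_w_zero hφ (by omega) hL hP hsing hright hleft hw
    · exact exists_ne_zero_mulVec_C_eq_zero_of_w_ne_zero hφ hk hL hsing hright hleft hw
  obtain ⟨μ, hμ⟩ := exists_forall_phiKron_ne hφ hk hξ0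
  have hUVμ : U.map (eval μ) * L.map (eval μ) * V.map (eval μ) =
      diagWithId k (P.map (eval μ)) := by
    rw [← coe_evalRingHom, ← diagWithId_map, ← hUV, Matrix.map_mul, Matrix.map_mul]
  have hVμ : IsUnit (V.map (eval μ)).det := by
    rw [← coe_evalRingHom, ← RingHom.mapMatrix_apply, ← RingHom.map_det]
    exact hV.map _
  have hLξμ : L.map (eval μ) *ᵥ ξ = 0 := funext fun p => by
    have h := congrArg (fun z => evalRingHom μ (z p)) hLξ
    simp only [RingHom.map_mulVec] at h
    simpa [Function.comp_def] using h
  have hle := finrank_ker_le_of_mul_mul_eq_diagWithId (by omega) hVμ hUVμ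
  have hlt := finrank_ker_lt_of_forall_ne (phiKron φ k μ) (phiKron_injective hφ (by omega) μ)
    (fun u hu => hright.mulVec_phiKron_eq_zero hu) hLξμ hμ
  omega

end PencilsOverField

section RealCoefficients

variable {n k : ℕ} {φ : ℕ → ℝ[X]} {Pm : ℕ → Matrix (Fin n) (Fin n) ℝ}
  {L : Matrix (Fin k × Fin n) (Fin k × Fin n) ℝ[X]} {K : Type*} [CommSemiring K]

theorem natDegree_matP_le (hφ : ∀ j, (φ j).degree = j) (r s : Fin n) :
    (matP n k φ Pm r s).natDegree ≤ k := by
  rw [matP, of_apply]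
  refine natDegree_sum_le_of_forall_le _ _ fun i hi => (natDegree_C_mul_le _ _).trans ?_
  rw [natDegree_eq_of_degree_eq_some (hφ i)]
  exact Finset.mem_range_succ_iff.1 hi

theorem mul_PhiMat_apply {m : Type*} (M : Matrix m (Fin k × Fin n) ℝ[X]) (p : m) (s : Fin n) :
    (M * PhiMat n k φ) p s = ∑ j : Fin k, M p (j, s) * φ (k - 1 - j) := by
  simp [mul_apply, PhiMat, Fintype.sum_prod_type]

theorem PhiMat_transpose_mul_apply {m : Type*} (M : Matrix (Fin k × Fin n) m ℝ[X]) (s : Fin n)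
    (q : m) : ((PhiMat n k φ)ᵀ * M) s q = ∑ i : Fin k, φ (k - 1 - i) * M (i, s) q := by
  simp [mul_apply, PhiMat, Fintype.sum_prod_type]

theorem Ansatz1.rightAnsatz_map {v : Fin k → ℝ} (h : Ansatz1 n k φ Pm L v) (f : ℝ →+* K) :
    RightAnsatz (fun j => mapRingHom f (φ j)) ((matP n k φ Pm).map (mapRingHom f))
      (L.map (mapRingHom f)) (f ∘ v) := fun p s => by
  simpa [mul_PhiMat_apply, vKron] using congrArg (mapRingHom f) (congrFun (congrFun h p) s)

theorem Ansatz2.leftAnsatz_map {w : Fin k → ℝ} (h : Ansatz2 n k φ Pm L w) (f : ℝ →+* K) :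
    LeftAnsatz (fun j => mapRingHom f (φ j)) ((matP n k φ Pm).map (mapRingHom f))
      (L.map (mapRingHom f)) (f ∘ w) := fun s q => by
  simpa [PhiMat_transpose_mul_apply, vKronRow] using
    congrArg (mapRingHom f) (congrFun (congrFun h s) q)

end RealCoefficients

theorem statement_15_general
    (n k : ℕ) (hk : 2 ≤ k)
    (a b c : ℕ → ℝ) (ha : ∀ j, a j ≠ 0)
    (φ : ℕ → Polynomial ℝ) (hφ0 : φ 0 = 1)
    (hφ1 : C (a 0) * φ 1 = (X - C (b 0)) * φ 0)
    (hφrec : ∀ j, C (a (j + 1)) * φ (j + 2) =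
      (X - C (b (j + 1))) * φ (j + 1) - C (c (j + 1)) * φ j)
    (Pm : ℕ → Matrix (Fin n) (Fin n) ℝ)
    (hsing : (matP n k φ Pm).det = 0)
    (L : Matrix (Fin k × Fin n) (Fin k × Fin n) (Polynomial ℝ)) (hL : IsPencil L)
    (h1 : ∃ v : Fin k → ℝ, Ansatz1 n k φ Pm L v)
    (h2 : ∃ w : Fin k → ℝ, Ansatz2 n k φ Pm L w) :
    ¬ IsLinearization n k L (matP n k φ Pm) := by
  rintro ⟨U, V, -, ⟨cv, hcv, hV⟩, hUV⟩
  obtain ⟨v, hv⟩ := h1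
  obtain ⟨w, hw⟩ := h2
  have hφ := degree_eq_of_threeTermRecurrence ha hφ0 hφ1 hφrec
  let ψ := mapRingHom (algebraMap ℝ ℂ)
  have hVψ : IsUnit (V.map ψ).det := by
    rw [← RingHom.mapMatrix_apply, ← RingHom.map_det, hV]
    simpa [ψ] using hcv
  refine mul_mul_ne_diagWithId (φ := fun j => ψ (φ j)) (P := (matP n k φ Pm).map ψ)
    (L := L.map ψ) (U := U.map ψ) (fun j => by simp [ψ, hφ]) hk
    (fun p q => degree_map_le.trans (hL p q))
    (fun r s => natDegree_map_le.trans (natDegree_matP_le hφ r s)) ?_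
    (hv.rightAnsatz_map (algebraMap ℝ ℂ)) (hw.leftAnsatz_map (algebraMap ℝ ℂ)) hVψ ?_
  · rw [← RingHom.mapMatrix_apply, ← RingHom.map_det, hsing, map_zero]
  · rw [← Matrix.map_mul, ← Matrix.map_mul, hUV]
    exact diagWithId_map ψ _

theorem statement_15
    (n k : ℕ) (hn : 0 < n) (hk : 2 ≤ k)
    (a b c : ℕ → ℝ) (ha : ∀ j, a j ≠ 0)
    (φ : ℕ → Polynomial ℝ) (hφ0 : φ 0 = 1)
    (hφ1 : C (a 0) * φ 1 = (X - C (b 0)) * φ 0)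
    (hφrec : ∀ j, C (a (j + 1)) * φ (j + 2) =
      (X - C (b (j + 1))) * φ (j + 1) - C (c (j + 1)) * φ j)
    (Pm : ℕ → Matrix (Fin n) (Fin n) ℝ) (hPk : Pm k ≠ 0)
    (hsing : (matP n k φ Pm).det = 0)
    (L : Matrix (Fin k × Fin n) (Fin k × Fin n) (Polynomial ℝ)) (hL : IsPencil L)
    (h1 : ∃ v : Fin k → ℝ, Ansatz1 n k φ Pm L v)
    (h2 : ∃ w : Fin k → ℝ, Ansatz2 n k φ Pm L w) :
    ¬ IsLinearization n k L (matP n k φ Pm) :=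
  statement_15_general n k hk a b c ha φ hφ0 hφ1 hφrec Pm hsing L hL h1 h2
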